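/- arXiv:2108.13416 — 6 statements merged into one kernel-verified Lean document; each statement's English description precedes it below -/
import Mathlib

section
/- (Kilmer–Saeki) Let ρ and τ be nonnegative finite measures on a measurable space X. Then ρ and τ are mutually singular if and only if for every ε > 0 there exists a nonnegative measurable function f on X with f > 0 τ-almost everywhere such that (∫ f dρ)·(∫ (1/f) dτ) < ε. -/
open MeasureTheory Filter Topology Real
open scoped ENNReal NNReal

/-! If `ρ` lives on `sᶜ` and `τ` on `s`, the function equal to `1` on `s` and to `δ` on `sᶜ` makes
the product `δ ρ(X) τ(X)`. Conversely, if `(∫ f dρ) (∫ f⁻¹ dτ) ≤ δ²`, Markov's inequality at the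
threshold `t = (∫ f dρ) / δ` gives `ρ {t ≤ f} ≤ δ` and `τ {f < t} ≤ δ`. Doing this for `δ = 2⁻ⁿ`
and applying Borel–Cantelli to both sequences of sets, their `limsup` is `ρ`-null and
has `τ`-null complement. -/

namespace MeasureTheory

variable {X : Type*} [MeasurableSpace X] {μ ν : Measure X}

theorem Measure.MutuallySingular.exists_lintegral_mul_lintegral_inv_lt (h : μ ⟂ₘ ν)
    [IsFiniteMeasure μ] [IsFiniteMeasure ν] {ε : ℝ≥0∞} (hε : ε ≠ 0) :
    ∃ f : X → ℝ≥0, Measurable f ∧ (∀ x, 0 < f x) ∧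
      (∫⁻ x, (f x : ℝ≥0∞) ∂μ) * (∫⁻ x, (f x : ℝ≥0∞)⁻¹ ∂ν) < ε := by
  classical
  obtain ⟨δ, hδ, hδε⟩ := ENNReal.exists_nnreal_pos_mul_lt
    (ENNReal.mul_ne_top (measure_ne_top μ .univ) (measure_ne_top ν .univ)) hε
  set s := h.nullSet
  refine ⟨s.piecewise 1 fun _ ↦ δ, Measurable.piecewise h.measurableSet_nullSet
    measurable_const measurable_const, fun x ↦ by by_cases hx : x ∈ s <;> simp [hx, hδ], ?_⟩
  have hμ : ∀ᵐ x ∂μ, x ∉ s := measure_eq_zero_iff_ae_notMem.mp h.measure_nullSet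
  have hν : ∀ᵐ x ∂ν, x ∈ s := by
    simpa [compl_compl] using measure_eq_zero_iff_ae_notMem.mp h.measure_compl_nullSet
  rw [lintegral_congr_ae (g := fun _ ↦ (δ : ℝ≥0∞)) (hμ.mono fun x hx ↦ by simp [hx]),
    lintegral_congr_ae (g := 1) (hν.mono fun x hx ↦ by simp [hx])]
  simpa [mul_assoc] using hδε

theorem measure_lt_le_mul_lintegral_inv {g : X → ℝ≥0∞} (hg : AEMeasurable g ν) {t : ℝ≥0∞}
    (ht₀ : t ≠ 0) (ht : t ≠ ∞) : ν {x | g x < t} ≤ t * ∫⁻ x, (g x)⁻¹ ∂ν :=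
  calc ν {x | g x < t} ≤ ν {x | t⁻¹ ≤ (g x)⁻¹} :=
        measure_mono fun x hx ↦ ENNReal.inv_le_inv.mpr (le_of_lt hx)
    _ ≤ (∫⁻ x, (g x)⁻¹ ∂ν) / t⁻¹ :=
        meas_ge_le_lintegral_div hg.inv (ENNReal.inv_ne_zero.mpr ht) (ENNReal.inv_ne_top.mpr ht₀)
    _ = t * ∫⁻ x, (g x)⁻¹ ∂ν := by rw [div_eq_mul_inv, inv_inv, mul_comm]

theorem exists_measure_le_measure_compl_le_of_lintegral_mul_lintegral_inv_le {f : X → ℝ≥0}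
    (hf : Measurable f) (hf_pos : ∀ᵐ x ∂ν, 0 < f x) {δ : ℝ≥0∞} (hδ₀ : δ ≠ 0) (hδ : δ ≠ ∞)
    (h : (∫⁻ x, (f x : ℝ≥0∞) ∂μ) * (∫⁻ x, (f x : ℝ≥0∞)⁻¹ ∂ν) ≤ δ * δ) :
    ∃ E, MeasurableSet E ∧ μ E ≤ δ ∧ ν Eᶜ ≤ δ := by
  rcases eq_or_ne ν 0 with rfl | hν
  · exact ⟨∅, .empty, by simp, by simp⟩
  set A := ∫⁻ x, (f x : ℝ≥0∞) ∂μ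
  set B := ∫⁻ x, (f x : ℝ≥0∞)⁻¹ ∂ν
  rcases eq_or_ne A 0 with hA₀ | hA₀
  · have hf_zero : ∀ᵐ x ∂μ, (f x : ℝ≥0∞) = 0 :=
      (lintegral_eq_zero_iff hf.coe_nnreal_ennreal).mp hA₀
    refine ⟨{x | 0 < f x}, measurableSet_lt measurable_const hf, ?_, ?_⟩
    · refine (measure_eq_zero_iff_ae_notMem.mpr ?_).trans_le zero_le
      exact hf_zero.mono fun x hx ↦ by simpa using hx
    · exact (measure_mono_null (fun _ ↦ id) (ae_iff.mp hf_pos)).trans_le zero_le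
  have hB₀ : B ≠ 0 := fun hB₀ ↦ hν <| ae_eq_bot.mp <| eventually_false_iff_eq_bot.mp <|
    ((lintegral_eq_zero_iff hf.coe_nnreal_ennreal.inv).mp hB₀).mono fun x hx ↦ by simp at hx
  have hA : A ≠ ∞ := fun hA ↦ by
    rw [hA, ENNReal.top_mul hB₀, top_le_iff, ENNReal.mul_eq_top] at h
    simp_all
  have hf' : ∀ m : Measure X, AEMeasurable (fun x ↦ (f x : ℝ≥0∞)) m := fun _ ↦
    hf.coe_nnreal_ennreal.aemeasurable
  set t := A / δ
  have ht₀ : t ≠ 0 := ENNReal.div_ne_zero.mpr ⟨hA₀, hδ⟩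
  have ht : t ≠ ∞ := ENNReal.div_ne_top hA hδ₀
  refine ⟨{x | t ≤ f x}, measurableSet_le measurable_const hf.coe_nnreal_ennreal, ?_, ?_⟩
  · calc μ {x | t ≤ f x} ≤ A / t := meas_ge_le_lintegral_div (hf' μ) ht₀ ht
      _ = δ := ENNReal.div_div_cancel hA₀ hA
  · calc ν {x | t ≤ f x}ᶜ = ν {x | f x < t} := by simp only [Set.compl_ofPred, not_le]
      _ ≤ t * B := measure_lt_le_mul_lintegral_inv (hf' ν) ht₀ ht
      _ = A * B / δ := ENNReal.mul_div_right_comm.symm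
      _ ≤ δ := ENNReal.div_le_of_le_mul h

theorem Measure.mutuallySingular_of_forall_exists_measure_le
    (h : ∀ δ : ℝ≥0, 0 < δ → ∃ E, MeasurableSet E ∧ μ E ≤ δ ∧ ν Eᶜ ≤ δ) : μ ⟂ₘ ν := by
  choose E hE hμE hνE using fun n : ℕ ↦ h ((2⁻¹ : ℝ≥0) ^ n) (by positivity)
  have limsup_null {m : Measure X} {F : ℕ → Set X}
      (hF : ∀ n, m (F n) ≤ ((2⁻¹ : ℝ≥0) ^ n : ℝ≥0)) : m (limsup F atTop) = 0 := by
    refine measure_limsup_atTop_eq_zero (ne_top_of_le_ne_top ?_ (ENNReal.tsum_le_tsum hF))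
    simp only [ENNReal.coe_pow, ENNReal.coe_inv two_ne_zero, ENNReal.coe_ofNat,
      ENNReal.tsum_geometric, ENNReal.one_sub_inv_two, inv_inv]
    exact ENNReal.ofNat_ne_top
  refine ⟨limsup E atTop, .measurableSet_limsup hE, limsup_null hμE, ?_⟩
  rw [limsup_compl]
  exact measure_mono_null liminf_le_limsup (limsup_null hνE)

end MeasureTheory

/-- Kilmer–Saeki: For finite nonnegative measures `ρ`, `τ` on a measurable
space `X`, `ρ ⊥ τ` iff for every `ε > 0` there is a nonnegative measurable `f` with
`f > 0` τ-a.e. and `(∫ f dρ) · (∫ 1/f dτ) < ε`. -/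
theorem kilmer_saeki
    {X : Type*} [MeasurableSpace X] (ρ τ : Measure X)
    [IsFiniteMeasure ρ] [IsFiniteMeasure τ] :
    Measure.MutuallySingular ρ τ ↔
      ∀ ε : ℝ, 0 < ε → ∃ f : X → ℝ≥0, Measurable f ∧ (∀ᵐ x ∂τ, 0 < f x) ∧
        (∫⁻ x, (f x : ℝ≥0∞) ∂ρ) * (∫⁻ x, (f x : ℝ≥0∞)⁻¹ ∂τ) < ENNReal.ofReal ε := by
  refine ⟨fun h ε hε ↦ ?_, fun h ↦ ?_⟩
  · obtain ⟨f, hf, hf_pos, hlt⟩ :=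
      h.exists_lintegral_mul_lintegral_inv_lt (ENNReal.ofReal_pos.mpr hε).ne'
    exact ⟨f, hf, .of_forall hf_pos, hlt⟩
  · refine Measure.mutuallySingular_of_forall_exists_measure_le fun δ hδ ↦ ?_
    obtain ⟨f, hf, hf_pos, hlt⟩ := h (δ * δ) (by positivity)
    refine exists_measure_le_measure_compl_le_of_lintegral_mul_lintegral_inv_le hf hf_pos
      (by simpa using hδ.ne') ENNReal.coe_ne_top (hlt.le.trans_eq ?_)
    rw [ENNReal.ofReal_mul δ.coe_nonneg, ENNReal.ofReal_coe_nnreal]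
end

section
/- Let ρ and τ be nonnegative finite measures on a measurable space X, and suppose that for some measurable f > 0 τ-a.e. and ε > 0 one has (∫ f dρ)(∫ (1/f) dτ) < ε. Then for any measure τ' with τ' ≤ ρ and τ' ≤ τ, one has τ'(X) ≤ √ε. -/
open MeasureTheory Filter Topology Real
open scoped ENNReal NNReal

/-- If `ρ, τ` are finite measures, `f > 0` τ-a.e. with
`(∫ f dρ)(∫ 1/f dτ) < ε`, then any measure `τ'` with `τ' ≤ ρ` and `τ' ≤ τ` satisfies
`τ'(X) ≤ √ε`. -/
theorem common_part_small_of_product_small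
    {X : Type*} [MeasurableSpace X] (ρ τ τ' : Measure X)
    [IsFiniteMeasure ρ] [IsFiniteMeasure τ]
    (hτ'ρ : τ' ≤ ρ) (hτ'τ : τ' ≤ τ)
    (f : X → ℝ≥0) (hf_meas : Measurable f) (hf_pos : ∀ᵐ x ∂τ, 0 < f x)
    {ε : ℝ} (hε : 0 < ε)
    (hprod : (∫⁻ x, (f x : ℝ≥0∞) ∂ρ) * (∫⁻ x, (f x : ℝ≥0∞)⁻¹ ∂τ) < ENNReal.ofReal ε) :
    τ' Set.univ ≤ ENNReal.ofReal (Real.sqrt ε) := by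
  have hmf : Measurable fun x => (f x : ℝ≥0∞) := hf_meas.coe_nnreal_ennreal
  set F : X → ℝ≥0∞ := fun x => ((f x : ℝ≥0∞)) ^ (1/2 : ℝ) with hF
  set G : X → ℝ≥0∞ := fun x => ((f x : ℝ≥0∞))⁻¹ ^ (1/2 : ℝ) with hG
  have hmF : Measurable F := hmf.pow_const _
  have hmG : Measurable G := hmf.inv.pow_const _
  have hpos' : ∀ᵐ x ∂τ', 0 < f x := hf_pos.filter_mono (ae_mono hτ'τ)
  have hholder := ENNReal.lintegral_mul_le_Lp_mul_Lq τ'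
    (Real.holderConjugate_iff_eq_conjExponent (by norm_num) |>.mpr (by norm_num))
    hmF.aemeasurable hmG.aemeasurable (p := 2) (q := 2)
  have hFp : ∀ x, F x ^ (2:ℝ) = (f x : ℝ≥0∞) := by
    intro x; simp only [hF]; rw [← ENNReal.rpow_mul]; norm_num
  have hGp : ∀ x, G x ^ (2:ℝ) = ((f x : ℝ≥0∞))⁻¹ := by
    intro x; simp only [hG]; rw [← ENNReal.rpow_mul]; norm_num
  have h1 : τ' Set.univ = ∫⁻ x, (F * G) x ∂τ' := by
    rw [← lintegral_one]
    refine lintegral_congr_ae ?_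
    filter_upwards [hpos'] with x hx
    have hne : (f x : ℝ≥0∞) ≠ 0 := by simpa using hx.ne'
    simp only [Pi.mul_apply, hF, hG]
    rw [← ENNReal.mul_rpow_of_ne_top (ENNReal.coe_ne_top) (ENNReal.inv_ne_top.mpr hne),
      ENNReal.mul_inv_cancel hne ENNReal.coe_ne_top, ENNReal.one_rpow]
  have h2 : (∫⁻ x, F x ^ (2:ℝ) ∂τ') = ∫⁻ x, (f x : ℝ≥0∞) ∂τ' := by
    simp_rw [hFp]
  have h3 : (∫⁻ x, G x ^ (2:ℝ) ∂τ') = ∫⁻ x, ((f x : ℝ≥0∞))⁻¹ ∂τ' := by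
    simp_rw [hGp]
  rw [h2, h3] at hholder
  have hle1 : (∫⁻ x, (f x : ℝ≥0∞) ∂τ') ≤ ∫⁻ x, (f x : ℝ≥0∞) ∂ρ := lintegral_mono' hτ'ρ le_rfl
  have hle2 : (∫⁻ x, ((f x : ℝ≥0∞))⁻¹ ∂τ') ≤ ∫⁻ x, ((f x : ℝ≥0∞))⁻¹ ∂τ := lintegral_mono' hτ'τ le_rfl
  have key : τ' Set.univ ≤ (ENNReal.ofReal ε) ^ (1/2 : ℝ) := by
    calc τ' Set.univ = ∫⁻ x, (F * G) x ∂τ' := h1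
      _ ≤ (∫⁻ x, (f x : ℝ≥0∞) ∂τ') ^ (1/2:ℝ) * (∫⁻ x, ((f x:ℝ≥0∞))⁻¹ ∂τ') ^ (1/2:ℝ) := hholder
      _ ≤ ((∫⁻ x, (f x : ℝ≥0∞) ∂ρ) * (∫⁻ x, ((f x:ℝ≥0∞))⁻¹ ∂τ)) ^ (1/2:ℝ) := by
          rw [ENNReal.mul_rpow_of_nonneg _ _ (by norm_num)]
          exact mul_le_mul' (ENNReal.rpow_le_rpow hle1 (by norm_num))
            (ENNReal.rpow_le_rpow hle2 (by norm_num))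
      _ ≤ (ENNReal.ofReal ε) ^ (1/2:ℝ) := ENNReal.rpow_le_rpow hprod.le (by norm_num)
  calc τ' Set.univ ≤ (ENNReal.ofReal ε) ^ (1/2 : ℝ) := key
    _ = ENNReal.ofReal (Real.sqrt ε) := by
        rw [ENNReal.ofReal_rpow_of_pos hε, Real.sqrt_eq_rpow]
end

section
/- Let τ be a finite measure on a Borel space X, and let (f_n) be a sequence of positive functions in L^1(τ) such that both f_n → 1 and 1/f_n → 1 in L^1(τ). Then there is a subsequence (f_{n_i}) such that ∫ |log f_{n_i}| dτ → 0; in particular exp(∫ log f_{n_i} dτ) → 1. -/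
open MeasureTheory Filter Topology Real

/- Since `log t ≤ t - 1` and `-log t = log t⁻¹ ≤ t⁻¹ - 1`, we have
`|log t| ≤ |t - 1| + |t⁻¹ - 1|` for `t > 0`. Integrating, `∫ |log f_n| dτ` is squeezed to `0`
by the two `L¹` distances, so the whole sequence (the identity subsequence) works, and
`|∫ log f_n dτ| ≤ ∫ |log f_n| dτ` gives the statement about `exp`. -/

lemma Real.abs_log_le_abs_sub_one_add_abs_inv_sub_one {t : ℝ} (ht : 0 < t) :
    |log t| ≤ |t - 1| + |t⁻¹ - 1| := by
  have hlog : log t ≤ t - 1 := log_le_sub_one_of_pos ht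
  have hlog_inv : -log t ≤ t⁻¹ - 1 := by
    simpa only [log_inv] using log_le_sub_one_of_pos (inv_pos.mpr ht)
  rw [abs_le]
  constructor <;> linarith [le_abs_self (t - 1), le_abs_self (t⁻¹ - 1), abs_nonneg (t - 1),
    abs_nonneg (t⁻¹ - 1)]

section

variable {X : Type*} [MeasurableSpace X] {μ : Measure X} [IsFiniteMeasure μ]

lemma integral_abs_log_le {g : X → ℝ} (hg_pos : ∀ᵐ x ∂μ, 0 < g x) (hg : Integrable g μ)
    (hg_inv : Integrable (fun x => (g x)⁻¹) μ) :
    ∫ x, |log (g x)| ∂μ ≤ ∫ x, |g x - 1| ∂μ + ∫ x, |(g x)⁻¹ - 1| ∂μ := by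
  have hsub : Integrable (fun x => |g x - 1|) μ := (hg.sub (integrable_const 1)).abs
  have hsub_inv : Integrable (fun x => |(g x)⁻¹ - 1|) μ := (hg_inv.sub (integrable_const 1)).abs
  rw [← integral_add hsub hsub_inv]
  refine integral_mono_of_nonneg (.of_forall fun x => abs_nonneg _) (hsub.add hsub_inv) ?_
  filter_upwards [hg_pos] with x hx using abs_log_le_abs_sub_one_add_abs_inv_sub_one hx

lemma tendsto_integral_abs_log_of_tendsto_integral_abs_sub_one {ι : Type*} {l : Filter ι}
    {f : ι → X → ℝ} (hf_pos : ∀ i, ∀ᵐ x ∂μ, 0 < f i x) (hf : ∀ i, Integrable (f i) μ)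
    (hf_inv : ∀ i, Integrable (fun x => (f i x)⁻¹) μ)
    (hf_L1 : Tendsto (fun i => ∫ x, |f i x - 1| ∂μ) l (𝓝 0))
    (hf_inv_L1 : Tendsto (fun i => ∫ x, |(f i x)⁻¹ - 1| ∂μ) l (𝓝 0)) :
    Tendsto (fun i => ∫ x, |log (f i x)| ∂μ) l (𝓝 0) := by
  refine squeeze_zero (fun i => integral_nonneg fun x => abs_nonneg _)
    (fun i => integral_abs_log_le (hf_pos i) (hf i) (hf_inv i)) ?_
  simpa only [add_zero] using hf_L1.add hf_inv_L1

end

lemma tendsto_exp_integral_log_of_tendsto_integral_abs_log {X ι : Type*} [MeasurableSpace X]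
    {μ : Measure X} {l : Filter ι} {f : ι → X → ℝ}
    (h : Tendsto (fun i => ∫ x, |log (f i x)| ∂μ) l (𝓝 0)) :
    Tendsto (fun i => exp (∫ x, log (f i x) ∂μ)) l (𝓝 1) := by
  have hint : Tendsto (fun i => ∫ x, log (f i x) ∂μ) l (𝓝 0) :=
    squeeze_zero_norm (fun i => norm_integral_le_integral_norm _) h
  simpa only [exp_zero, Function.comp_def] using (continuous_exp.tendsto 0).comp hint

/-- Let `τ` be a finite measure, and `(f_n)` a sequence of a.e. positive
functions with `f_n, 1/f_n ∈ L¹(τ)` and `f_n → 1`, `1/f_n → 1` in `L¹(τ)`. Then some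
subsequence satisfies `∫ |log f_{n_i}| dτ → 0`; in particular
`exp (∫ log f_{n_i} dτ) → 1`. -/
theorem mahler_tendsto_one_of_L1
    {X : Type*} [MeasurableSpace X] (τ : Measure X) [IsFiniteMeasure τ]
    (f : ℕ → X → ℝ)
    (hf_pos : ∀ n, ∀ᵐ x ∂τ, 0 < f n x)
    (hf_int : ∀ n, Integrable (f n) τ)
    (hinv_int : ∀ n, Integrable (fun x => (f n x)⁻¹) τ)
    (hf_L1 : Tendsto (fun n => ∫ x, |f n x - 1| ∂τ) atTop (𝓝 0))
    (hinv_L1 : Tendsto (fun n => ∫ x, |(f n x)⁻¹ - 1| ∂τ) atTop (𝓝 0)) :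
    ∃ φ : ℕ → ℕ, StrictMono φ ∧
      Tendsto (fun i => ∫ x, |Real.log (f (φ i) x)| ∂τ) atTop (𝓝 0) ∧
      Tendsto (fun i => Real.exp (∫ x, Real.log (f (φ i) x) ∂τ)) atTop (𝓝 1) := by
  have hlog := tendsto_integral_abs_log_of_tendsto_integral_abs_sub_one
    hf_pos hf_int hinv_int hf_L1 hinv_L1
  exact ⟨id, strictMono_id, hlog, tendsto_exp_integral_log_of_tendsto_integral_abs_log hlog⟩
end

section
/- Let ρ be a probability measure on the circle 𝕋 and σ_n = f_n dρ a sequence of probability measures converging weakly to a probability measure τ, with each f_n > 0 τ-a.e. and sup_n ∫ (1/f_n) dτ < ∞. Then τ ⊥ ρ if and only if lim_{n→∞} ∫ √(f_n) dρ = 0. -/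
/-!
If `τ ⟂ ρ`, Urysohn's lemma gives a continuous `0 ≤ g ≤ 1` with `∫ g dτ` and `∫ (1 - g) dρ`
both small. Splitting `√f_n ≤ √(g f_n) + √((1 - g) f_n)` and applying Cauchy–Schwarz,
`∫ √f_n dρ ≤ √(∫ g f_n dρ) + √(∫ (1 - g) dρ)`, and by weak convergence the first term tends to
`√(∫ g dτ)`.

Conversely, let `h = dτ/dρ` be the density of the absolutely continuous part of `τ`. Writing
`√h = √(h f_n^{-1/2}) · f_n^{1/4}` and applying Cauchy–Schwarz twice,
`∫ √h dρ ≤ (∫ f_n^{-1/2} dτ)^{1/2} (∫ √f_n dρ)^{1/2} ≤ (∫ 1/f_n dτ)^{1/4} (∫ √f_n dρ)^{1/2}`,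
which tends to `0`; hence `h = 0` `ρ`-a.e.
-/

open MeasureTheory Filter Topology Real
open scoped ENNReal

theorem Real.sqrt_add_le_add_sqrt {a b : ℝ} (ha : 0 ≤ a) (hb : 0 ≤ b) : √(a + b) ≤ √a + √b := by
  rw [Real.sqrt_le_iff]
  constructor
  · positivity
  · nlinarith [Real.sq_sqrt ha, Real.sq_sqrt hb, Real.sqrt_nonneg a, Real.sqrt_nonneg b]

theorem Real.norm_le_one_of_mem_Icc {t : ℝ} (ht : t ∈ Set.Icc (0 : ℝ) 1) : ‖t‖ ≤ 1 := by
  rw [Real.norm_of_nonneg ht.1]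
  exact ht.2

theorem ENNReal.ofReal_sqrt (x : ℝ) : ENNReal.ofReal √x = ENNReal.ofReal x ^ (1 / 2 : ℝ) := by
  rcases le_total 0 x with hx | hx
  · rw [Real.sqrt_eq_rpow, ENNReal.ofReal_rpow_of_nonneg hx (by norm_num)]
  · rw [Real.sqrt_eq_zero'.2 hx, ENNReal.ofReal_of_nonpos hx,
      ENNReal.zero_rpow_of_pos (by norm_num), ENNReal.ofReal_zero]

theorem ENNReal.rpow_half_eq_mul_rpow_half (a : ℝ≥0∞) {b : ℝ≥0∞} (hb0 : b ≠ 0) (hb : b ≠ ∞) :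
    a ^ (1 / 2 : ℝ) =
      (a * b ^ (-(1 / 2) : ℝ)) ^ (1 / 2 : ℝ) * (b ^ (1 / 2 : ℝ)) ^ (1 / 2 : ℝ) := by
  rw [← ENNReal.mul_rpow_of_nonneg _ _ (by norm_num), mul_assoc, ← ENNReal.rpow_add _ _ hb0 hb,
    neg_add_cancel, ENNReal.rpow_zero, mul_one]

namespace MeasureTheory

section SqrtIntegral

variable {α : Type*} [MeasurableSpace α] {μ : Measure α} {a b : α → ℝ}

theorem Integrable.sqrt [IsFiniteMeasure μ] (ha : Integrable a μ) (ha0 : 0 ≤ᵐ[μ] a) :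
    Integrable (fun x => √(a x)) μ := by
  refine ((integrable_const 1).add ha).mono'
    (Real.continuous_sqrt.comp_aestronglyMeasurable ha.aestronglyMeasurable) ?_
  filter_upwards [ha0] with x hx
  rw [Real.norm_of_nonneg (Real.sqrt_nonneg _), Pi.add_apply]
  nlinarith [Real.sq_sqrt hx, Real.sqrt_nonneg (a x)]

theorem integrable_of_mem_Icc [IsFiniteMeasure μ] (ham : AEStronglyMeasurable a μ)
    (ha : ∀ x, a x ∈ Set.Icc 0 1) : Integrable a μ :=
  .of_bound ham 1 (ae_of_all _ fun x => Real.norm_le_one_of_mem_Icc (ha x))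

theorem integral_sqrt_eq_toReal_lintegral (ha : AEStronglyMeasurable a μ) :
    ∫ x, √(a x) ∂μ = (∫⁻ x, ENNReal.ofReal (a x) ^ (1 / 2 : ℝ) ∂μ).toReal := by
  simp only [← ENNReal.ofReal_sqrt]
  exact integral_eq_lintegral_of_nonneg_ae (ae_of_all _ fun _ => Real.sqrt_nonneg _)
    (Real.continuous_sqrt.comp_aestronglyMeasurable ha)

theorem ofReal_integral_sqrt [IsFiniteMeasure μ] (ha : Integrable a μ) (ha0 : 0 ≤ᵐ[μ] a) :
    ENNReal.ofReal (∫ x, √(a x) ∂μ) = ∫⁻ x, ENNReal.ofReal (a x) ^ (1 / 2 : ℝ) ∂μ := by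
  simp only [← ENNReal.ofReal_sqrt]
  exact ofReal_integral_eq_lintegral_ofReal (ha.sqrt ha0)
    (ae_of_all _ fun _ => Real.sqrt_nonneg _)

theorem integral_sqrt_mul_le (ha0 : 0 ≤ᵐ[μ] a) (hb0 : 0 ≤ᵐ[μ] b)
    (ha : Integrable a μ) (hb : Integrable b μ) :
    ∫ x, √(a x * b x) ∂μ ≤ √(∫ x, a x ∂μ) * √(∫ x, b x ∂μ) := by
  have hCS := ENNReal.lintegral_mul_norm_pow_le ha.aemeasurable.ennreal_ofReal
    hb.aemeasurable.ennreal_ofReal (p := 1 / 2) (q := 1 / 2)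
    (by norm_num) (by norm_num) (by norm_num)
  rw [integral_sqrt_eq_toReal_lintegral (a := fun x => a x * b x)
      (ha.aestronglyMeasurable.mul hb.aestronglyMeasurable),
    integral_eq_lintegral_of_nonneg_ae ha0 ha.aestronglyMeasurable,
    integral_eq_lintegral_of_nonneg_ae hb0 hb.aestronglyMeasurable, Real.sqrt_eq_rpow,
    Real.sqrt_eq_rpow, ENNReal.toReal_rpow, ENNReal.toReal_rpow, ← ENNReal.toReal_mul]
  refine ENNReal.toReal_mono ?_ ((lintegral_mono_ae ?_).trans hCS)
  · exact ENNReal.mul_ne_top (ENNReal.rpow_ne_top_of_nonneg (by norm_num) ha.lintegral_lt_top.ne)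
      (ENNReal.rpow_ne_top_of_nonneg (by norm_num) hb.lintegral_lt_top.ne)
  filter_upwards [ha0] with x hx
  rw [ENNReal.ofReal_mul hx, ENNReal.mul_rpow_of_nonneg _ _ (by norm_num)]

theorem integral_sqrt_le_sqrt_integral [IsProbabilityMeasure μ] (ha0 : 0 ≤ᵐ[μ] a)
    (ha : Integrable a μ) : ∫ x, √(a x) ∂μ ≤ √(∫ x, a x ∂μ) := by
  simpa using integral_sqrt_mul_le ha0 (ae_of_all _ fun _ => zero_le_one) ha (integrable_const 1)

theorem integral_sqrt_le_of_mem_Icc [IsProbabilityMeasure μ] {f g : α → ℝ}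
    (hf0 : 0 ≤ᵐ[μ] f) (hf : Integrable f μ) (hgm : AEStronglyMeasurable g μ)
    (hg : ∀ x, g x ∈ Set.Icc 0 1) :
    ∫ x, √(f x) ∂μ ≤ √(∫ x, g x * f x ∂μ) + √(∫ x, 1 - g x ∂μ) * √(∫ x, f x ∂μ) := by
  have h1g : ∀ x, 1 - g x ∈ Set.Icc 0 1 := fun x =>
    ⟨by linarith [(hg x).2], by linarith [(hg x).1]⟩
  have h1gm : AEStronglyMeasurable (fun x => 1 - g x) μ := aestronglyMeasurable_const.sub hgm
  have hgf : Integrable (fun x => g x * f x) μ :=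
    hf.bdd_mul hgm (ae_of_all _ fun x => Real.norm_le_one_of_mem_Icc (hg x))
  have h1gf : Integrable (fun x => (1 - g x) * f x) μ :=
    hf.bdd_mul h1gm (ae_of_all _ fun x => Real.norm_le_one_of_mem_Icc (h1g x))
  have hgf0 : 0 ≤ᵐ[μ] fun x => g x * f x := by
    filter_upwards [hf0] with x hx using mul_nonneg (hg x).1 hx
  have h1gf0 : 0 ≤ᵐ[μ] fun x => (1 - g x) * f x := by
    filter_upwards [hf0] with x hx using mul_nonneg (h1g x).1 hx
  calc ∫ x, √(f x) ∂μ ≤ ∫ x, (√(g x * f x) + √((1 - g x) * f x)) ∂μ := by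
        refine integral_mono_of_nonneg (ae_of_all _ fun _ => Real.sqrt_nonneg _)
          ((hgf.sqrt hgf0).add (h1gf.sqrt h1gf0)) ?_
        filter_upwards [hgf0, h1gf0] with x hx hx'
        calc √(f x) = √(g x * f x + (1 - g x) * f x) := by ring_nf
          _ ≤ √(g x * f x) + √((1 - g x) * f x) := Real.sqrt_add_le_add_sqrt hx hx'
    _ = ∫ x, √(g x * f x) ∂μ + ∫ x, √((1 - g x) * f x) ∂μ :=
        integral_add (hgf.sqrt hgf0) (h1gf.sqrt h1gf0)
    _ ≤ √(∫ x, g x * f x ∂μ) + √(∫ x, 1 - g x ∂μ) * √(∫ x, f x ∂μ) :=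
        add_le_add (integral_sqrt_le_sqrt_integral hgf0 hgf)
          (integral_sqrt_mul_le (ae_of_all _ fun x => (h1g x).1) hf0
            (integrable_of_mem_Icc h1gm h1g) hf)

end SqrtIntegral

theorem Measure.MutuallySingular.exists_continuous_integral_le
    {X : Type*} [TopologicalSpace X] [NormalSpace X] [MeasurableSpace X] [OpensMeasurableSpace X]
    {μ ν : Measure X} [IsFiniteMeasure μ] [IsFiniteMeasure ν] [μ.OuterRegular] [ν.WeaklyRegular]
    (h : μ ⟂ₘ ν) {δ : ℝ} (hδ : 0 < δ) :
    ∃ g : C(X, ℝ), (∀ x, g x ∈ Set.Icc 0 1) ∧ ∫ x, g x ∂μ ≤ δ ∧ ∫ x, 1 - g x ∂ν ≤ δ := by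
  obtain ⟨s, hs, hμs, hνs⟩ := h
  obtain ⟨K, hKs, hK, hνK⟩ :=
    hs.exists_isClosed_sdiff_lt (measure_ne_top ν s) (ENNReal.ofReal_pos.2 hδ).ne'
  obtain ⟨U, hKU, hU, hμU⟩ := K.exists_isOpen_lt_of_lt _
    ((measure_mono_null hKs hμs).trans_lt (ENNReal.ofReal_pos.2 hδ))
  obtain ⟨g, hgU, hgK, hg⟩ := exists_continuous_zero_one_of_isClosed hU.isClosed_compl hK
    (Set.disjoint_compl_left_iff_subset.2 hKU)
  have hg_int : ∀ m : Measure X, [IsFiniteMeasure m] → Integrable g m := fun _ _ =>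
    integrable_of_mem_Icc g.continuous.aestronglyMeasurable hg
  refine ⟨g, hg, ?_, ?_⟩
  · calc ∫ x, g x ∂μ ≤ ∫ x, U.indicator 1 x ∂μ := by
          refine integral_mono (hg_int μ) ((integrable_const 1).indicator hU.measurableSet)
            fun x => ?_
          by_cases hx : x ∈ U
          · simpa [hx] using (hg x).2
          · simpa [hx] using (hgU hx).le
      _ = μ.real U := integral_indicator_one hU.measurableSet
      _ ≤ δ := ENNReal.toReal_le_of_le_ofReal hδ.le hμU.le
  · have hνKc : ν Kᶜ < ENNReal.ofReal δ := by
      rw [← measure_sdiff_null hνs, compl_sdiff_compl]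
      exact hνK
    calc ∫ x, 1 - g x ∂ν ≤ ∫ x, Kᶜ.indicator 1 x ∂ν := by
          refine integral_mono ((integrable_const 1).sub (hg_int ν))
            ((integrable_const 1).indicator hK.isOpen_compl.measurableSet) fun x => ?_
          by_cases hx : x ∈ K
          · simpa [hx] using (hgK hx).ge
          · simpa [hx] using (hg x).1
      _ = ν.real Kᶜ := integral_indicator_one hK.isOpen_compl.measurableSet
      _ ≤ δ := ENNReal.toReal_le_of_le_ofReal hδ.le hνKc.le

theorem tendsto_integral_sqrt_zero_of_mutuallySingular
    {X : Type*} [TopologicalSpace X] [NormalSpace X] [MeasurableSpace X] [OpensMeasurableSpace X]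
    {ρ τ : Measure X} [IsProbabilityMeasure ρ] [IsFiniteMeasure τ] [ρ.WeaklyRegular]
    [τ.OuterRegular] {f : ℕ → X → ℝ} (hf0 : ∀ n, 0 ≤ᵐ[ρ] f n) (hf : ∀ n, Integrable (f n) ρ)
    (hf1 : ∀ n, ∫ x, f n x ∂ρ = 1)
    (hweak : ∀ g : C(X, ℝ), Tendsto (fun n => ∫ x, g x * f n x ∂ρ) atTop (𝓝 (∫ x, g x ∂τ)))
    (hτρ : τ ⟂ₘ ρ) :
    Tendsto (fun n => ∫ x, √(f n x) ∂ρ) atTop (𝓝 0) := by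
  refine tendsto_order.2 ⟨fun a ha => .of_forall fun n =>
    ha.trans_le (integral_nonneg fun _ => Real.sqrt_nonneg _), fun ε hε => ?_⟩
  set δ := (ε / 3) ^ 2
  have hδ : 0 < δ := by positivity
  obtain ⟨g, hg, hgτ, hgρ⟩ := hτρ.exists_continuous_integral_le (half_pos hδ)
  filter_upwards [(hweak g).eventually_lt_const (hgτ.trans_lt (half_lt_self hδ))] with n hn
  calc ∫ x, √(f n x) ∂ρ
      ≤ √(∫ x, g x * f n x ∂ρ) + √(∫ x, 1 - g x ∂ρ) * √(∫ x, f n x ∂ρ) :=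
        integral_sqrt_le_of_mem_Icc (hf0 n) (hf n) g.continuous.aestronglyMeasurable hg
    _ ≤ √δ + √δ * 1 := by
        rw [hf1, Real.sqrt_one]
        gcongr
        linarith
    _ < ε := by
        rw [Real.sqrt_sq (by positivity)]
        linarith

section RnDeriv

variable {α : Type*} [MeasurableSpace α] {μ ν : Measure α} {F : α → ℝ≥0∞}

theorem lintegral_rpow_neg_half_le (hF : AEMeasurable F μ) :
    ∫⁻ x, F x ^ (-(1 / 2) : ℝ) ∂μ ≤
      (∫⁻ x, (F x)⁻¹ ∂μ) ^ (1 / 2 : ℝ) * μ Set.univ ^ (1 / 2 : ℝ) := by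
  simpa [ENNReal.rpow_neg, ENNReal.inv_rpow] using ENNReal.lintegral_mul_norm_pow_le hF.inv
    (aemeasurable_const (b := 1)) (μ := μ) (p := 1 / 2) (q := 1 / 2)
    (by norm_num) (by norm_num) (by norm_num)

theorem Measure.lintegral_rnDeriv_rpow_half_le (hF : AEMeasurable F ν)
    (hF0 : ∀ᵐ x ∂μ, F x ≠ 0) (hF_top : ∀ᵐ x ∂μ, F x ≠ ∞) :
    ∫⁻ x, μ.rnDeriv ν x ^ (1 / 2 : ℝ) ∂ν ≤
      (∫⁻ x, F x ^ (-(1 / 2) : ℝ) ∂μ) ^ (1 / 2 : ℝ) *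
        (∫⁻ x, F x ^ (1 / 2 : ℝ) ∂ν) ^ (1 / 2 : ℝ) := by
  have hh := (μ.measurable_rnDeriv ν).aemeasurable (μ := ν)
  have hFν : ∀ᵐ x ∂ν, μ.rnDeriv ν x ≠ 0 → F x ≠ 0 ∧ F x ≠ ∞ :=
    (ae_withDensity_iff' hh).1 <|
      (absolutelyContinuous_of_le (μ.withDensity_rnDeriv_le ν)).ae_le (hF0.and hF_top)
  have hcross : ∫⁻ x, μ.rnDeriv ν x * F x ^ (-(1 / 2) : ℝ) ∂ν ≤
      ∫⁻ x, F x ^ (-(1 / 2) : ℝ) ∂μ := by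
    refine le_of_eq_of_le (lintegral_withDensity_eq_lintegral_mul₀ hh (hF.pow_const _)).symm ?_
    exact lintegral_mono' (μ.withDensity_rnDeriv_le ν) le_rfl
  calc ∫⁻ x, μ.rnDeriv ν x ^ (1 / 2 : ℝ) ∂ν
      = ∫⁻ x, (μ.rnDeriv ν x * F x ^ (-(1 / 2) : ℝ)) ^ (1 / 2 : ℝ) *
          (F x ^ (1 / 2 : ℝ)) ^ (1 / 2 : ℝ) ∂ν := by
        refine lintegral_congr_ae ?_
        filter_upwards [hFν] with x hx
        by_cases hx0 : μ.rnDeriv ν x = 0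
        · simp [hx0]
        · exact ENNReal.rpow_half_eq_mul_rpow_half _ (hx hx0).1 (hx hx0).2
    _ ≤ (∫⁻ x, μ.rnDeriv ν x * F x ^ (-(1 / 2) : ℝ) ∂ν) ^ (1 / 2 : ℝ) *
          (∫⁻ x, F x ^ (1 / 2 : ℝ) ∂ν) ^ (1 / 2 : ℝ) :=
        ENNReal.lintegral_mul_norm_pow_le (hh.mul (hF.pow_const _)) (hF.pow_const _)
          (by norm_num) (by norm_num) (by norm_num)
    _ ≤ (∫⁻ x, F x ^ (-(1 / 2) : ℝ) ∂μ) ^ (1 / 2 : ℝ) *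
          (∫⁻ x, F x ^ (1 / 2 : ℝ) ∂ν) ^ (1 / 2 : ℝ) :=
        mul_le_mul_left (ENNReal.rpow_le_rpow hcross (by norm_num)) _

theorem Measure.mutuallySingular_of_tendsto_lintegral_rpow_half [IsFiniteMeasure μ]
    [SigmaFinite ν] {F : ℕ → α → ℝ≥0∞} (hF : ∀ n, Measurable (F n))
    (hF0 : ∀ n, ∀ᵐ x ∂μ, F n x ≠ 0) (hF_top : ∀ n, ∀ᵐ x ∂μ, F n x ≠ ∞)
    {C : ℝ≥0∞} (hC : C ≠ ∞) (hFC : ∀ n, ∫⁻ x, (F n x)⁻¹ ∂μ ≤ C)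
    (hlim : Tendsto (fun n => ∫⁻ x, F n x ^ (1 / 2 : ℝ) ∂ν) atTop (𝓝 0)) :
    μ ⟂ₘ ν := by
  set c := (C ^ (1 / 2 : ℝ) * μ Set.univ ^ (1 / 2 : ℝ)) ^ (1 / 2 : ℝ)
  have hc : c ≠ ∞ := by simp [c, hC, ENNReal.mul_eq_top, measure_ne_top]
  have hbound (n : ℕ) : ∫⁻ x, μ.rnDeriv ν x ^ (1 / 2 : ℝ) ∂ν ≤
      c * (∫⁻ x, F n x ^ (1 / 2 : ℝ) ∂ν) ^ (1 / 2 : ℝ) := by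
    refine (lintegral_rnDeriv_rpow_half_le (hF n).aemeasurable (hF0 n) (hF_top n)).trans ?_
    refine mul_le_mul_left (ENNReal.rpow_le_rpow ?_ (by norm_num)) _
    exact (lintegral_rpow_neg_half_le (hF n).aemeasurable).trans
      (mul_le_mul_left (ENNReal.rpow_le_rpow (hFC n) (by norm_num)) _)
  have hzero : ∫⁻ x, μ.rnDeriv ν x ^ (1 / 2 : ℝ) ∂ν = 0 := le_antisymm
    (ge_of_tendsto' ((ENNReal.tendsto_const_mul_rpow_nhds_zero_of_pos hc (by norm_num)).comp hlim)
      hbound) bot_le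
  have := haveLebesgueDecomposition_of_sigmaFinite μ ν
  rw [← rnDeriv_eq_zero]
  filter_upwards [(lintegral_eq_zero_iff ((μ.measurable_rnDeriv ν).pow_const _)).1 hzero]
    with x hx
  exact (ENNReal.rpow_eq_zero_iff_of_pos (by norm_num)).1 hx

end RnDeriv

end MeasureTheory

/-- Let `ρ` be a probability measure on the circle and `σ_n = f_n dρ`
probability measures converging weakly to a probability measure `τ`, with `f_n > 0`
τ-a.e. and `sup_n ∫ 1/f_n dτ < ∞`. Then `τ ⊥ ρ` iff `∫ √f_n dρ → 0`. -/
theorem singular_iff_sqrt_tendsto_zero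
    (ρ τ : Measure (AddCircle (1:ℝ)))
    [IsProbabilityMeasure ρ] [IsProbabilityMeasure τ]
    (f : ℕ → AddCircle (1:ℝ) → ℝ)
    (hf_meas : ∀ n, Measurable (f n))
    (hf_nonneg : ∀ n, ∀ᵐ x ∂ρ, 0 ≤ f n x)
    (hf_int : ∀ n, Integrable (f n) ρ)
    (hf_prob : ∀ n, ∫ x, f n x ∂ρ = 1)
    (hweak : ∀ g : C(AddCircle (1:ℝ), ℝ),
      Tendsto (fun n => ∫ x, g x * f n x ∂ρ) atTop (𝓝 (∫ x, g x ∂τ)))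
    (hf_pos : ∀ n, ∀ᵐ x ∂τ, 0 < f n x)
    (M : ℝ) (hM : ∀ n, ∫⁻ x, ENNReal.ofReal (f n x)⁻¹ ∂τ ≤ ENNReal.ofReal M) :
    Measure.MutuallySingular τ ρ ↔
      Tendsto (fun n => ∫ x, Real.sqrt (f n x) ∂ρ) atTop (𝓝 0) := by
  refine ⟨tendsto_integral_sqrt_zero_of_mutuallySingular hf_nonneg hf_int hf_prob hweak,
    fun hlim => ?_⟩
  -- The two inverses differ where `f n x = 0`, since `(0 : ℝ)⁻¹ = 0`.
  have hFC (n : ℕ) : ∫⁻ x, (ENNReal.ofReal (f n x))⁻¹ ∂τ ≤ ENNReal.ofReal M := by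
    refine le_of_eq_of_le (lintegral_congr_ae ?_) (hM n)
    filter_upwards [hf_pos n] with x hx using (ENNReal.ofReal_inv_of_pos hx).symm
  have hFlim : Tendsto (fun n => ∫⁻ x, ENNReal.ofReal (f n x) ^ (1 / 2 : ℝ) ∂ρ) atTop (𝓝 0) := by
    simp_rw [← ofReal_integral_sqrt (hf_int _) (hf_nonneg _)]
    simpa using ENNReal.tendsto_ofReal hlim
  exact Measure.mutuallySingular_of_tendsto_lintegral_rpow_half
    (fun n => (hf_meas n).ennreal_ofReal)
    (fun n => (hf_pos n).mono fun x hx => (ENNReal.ofReal_pos.2 hx).ne')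
    (fun n => ae_of_all _ fun _ => ENNReal.ofReal_ne_top) ENNReal.ofReal_ne_top hFC hFlim
end

section
/- (Upper semicontinuity of affinity) Let (σ_n) and (ρ_n) be sequences of probability measures on the circle converging weakly to probability measures σ and ρ respectively. Then limsup_{n→∞} G(σ_n, ρ_n) ≤ G(σ, ρ), where G denotes the Hellinger affinity. -/
open MeasureTheory Filter Topology Real

/-- The Hellinger affinity of two measures, computed with respect to the dominating
measure `σ + ρ`:  `G(σ,ρ) = ∫ √((dσ/dκ)(dρ/dκ)) dκ` with `κ = σ + ρ`. -/
noncomputable def hellingerAffinity {X : Type*} [MeasurableSpace X]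
    (σ ρ : Measure X) : ℝ :=
  ∫ x, Real.sqrt ((σ.rnDeriv (σ + ρ) x).toReal * (ρ.rnDeriv (σ + ρ) x).toReal) ∂(σ + ρ)

/-!
Write `g`, `h` for the densities of `μ`, `ν` with respect to `μ + ν`. By AM–GM,
`√(g h) ≤ (g f + h f⁻¹) / 2` for every positive `f`, so
`G(μ, ν) ≤ (∫ f dμ + ∫ f⁻¹ dν) / 2`, with equality at `f = √(h / g)`. Regularising this `f`
and approximating it in `L¹(μ + ν)` by bounded continuous functions bounded away from `0` shows
that `G(μ, ν)` is the infimum of these bounds over such `f`. For each such `f` the bound is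
continuous under weak convergence of `(μ, ν)`, and an infimum of continuous functions is upper
semicontinuous.
-/

open scoped BoundedContinuousFunction

lemma sqrt_mul_le_mul_add_mul_inv {a b t : ℝ} (ha : 0 ≤ a) (hb : 0 ≤ b) (ht : 0 < t) :
    √(a * b) ≤ (a * t + b * t⁻¹) / 2 := by
  have hab : a * b = (a * t) * (b * t⁻¹) := by field_simp
  rw [hab, Real.sqrt_mul (by positivity)]
  have := two_mul_le_add_sq (√(a * t)) (√(b * t⁻¹))
  rw [Real.sq_sqrt (by positivity), Real.sq_sqrt (by positivity)] at this
  linarith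

lemma mul_add_mul_inv_le_mul_add_mul_inv_add_abs_sub {g h c v w : ℝ} (hg : 0 ≤ g) (hg1 : g ≤ 1)
    (hh : 0 ≤ h) (hh1 : h ≤ 1) (hc : 0 < c) (hcv : c ≤ v) (hcw : c ≤ w) :
    g * v + h * v⁻¹ ≤ g * w + h * w⁻¹ + (1 + (c ^ 2)⁻¹) * |v - w| := by
  have hv : 0 < v := hc.trans_le hcv
  have hw : 0 < w := hc.trans_le hcw
  have hg_term : g * v - g * w ≤ |v - w| := by
    rw [← mul_sub]; nlinarith [le_abs_self (v - w), abs_nonneg (v - w)]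
  have hh_term : h * v⁻¹ - h * w⁻¹ ≤ (c ^ 2)⁻¹ * |v - w| := by
    have hvw : c ^ 2 ≤ v * w := by nlinarith
    have hnum : h * (w - v) ≤ |v - w| := by
      nlinarith [neg_abs_le (v - w), abs_nonneg (v - w)]
    calc h * v⁻¹ - h * w⁻¹ = h * (w - v) / (v * w) := by field_simp
      _ ≤ |v - w| / c ^ 2 := div_le_div₀ (abs_nonneg _) hnum (by positivity) hvw
      _ = (c ^ 2)⁻¹ * |v - w| := by ring
  linarith

lemma mul_sqrt_div_add_mul_inv_sqrt_div_le {g h δ : ℝ} (hg : 0 ≤ g) (hh : 0 ≤ h) (hδ : 0 < δ) :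
    g * √((h + δ) / (g + δ)) + h * (√((h + δ) / (g + δ)))⁻¹ ≤ 2 * √((g + δ) * (h + δ)) := by
  have ha : 0 < √(g + δ) := Real.sqrt_pos.2 (by linarith)
  have hb : 0 < √(h + δ) := Real.sqrt_pos.2 (by linarith)
  have ha2 := Real.sq_sqrt (show 0 ≤ g + δ by linarith)
  have hb2 := Real.sq_sqrt (show 0 ≤ h + δ by linarith)
  rw [Real.sqrt_div' _ (by linarith), Real.sqrt_mul (by linarith), inv_div]
  have hg_term : g * (√(h + δ) / √(g + δ)) ≤ √(g + δ) * √(h + δ) := by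
    rw [mul_div_assoc', div_le_iff₀ ha]; nlinarith
  have hh_term : h * (√(g + δ) / √(h + δ)) ≤ √(g + δ) * √(h + δ) := by
    rw [mul_div_assoc', div_le_iff₀ hb]; nlinarith
  linarith

lemma sqrt_add_mul_sqrt_add_le {g h δ : ℝ} (hg : 0 ≤ g) (hg1 : g ≤ 1) (hh : 0 ≤ h) (hh1 : h ≤ 1)
    (hδ : 0 ≤ δ) : √((g + δ) * (h + δ)) ≤ √(g * h) + (2 * √δ + δ) := by
  have hgh := Real.sq_sqrt (mul_nonneg hg hh)
  have hδ2 := Real.sq_sqrt hδ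
  refine Real.sqrt_le_iff.2 ⟨by positivity, ?_⟩
  nlinarith [Real.sqrt_nonneg (g * h), Real.sqrt_nonneg δ,
    mul_nonneg (Real.sqrt_nonneg (g * h)) (Real.sqrt_nonneg δ)]

lemma mul_add_mul_inv_le_sqrt_mul_add {g h δ v : ℝ} (hg : 0 ≤ g) (hg1 : g ≤ 1) (hh : 0 ≤ h)
    (hh1 : h ≤ 1) (hδ : 0 < δ) (hv : √(δ / (1 + δ)) ≤ v) :
    (g * v + h * v⁻¹) / 2 ≤ √(g * h) + (2 * √δ + δ)
      + (1 + (1 + δ) / δ) / 2 * |v - √((h + δ) / (g + δ))| := by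
  have hc : 0 < √(δ / (1 + δ)) := Real.sqrt_pos.2 (by positivity)
  have hφ : √(δ / (1 + δ)) ≤ √((h + δ) / (g + δ)) :=
    Real.sqrt_le_sqrt (div_le_div₀ (by positivity) (by linarith) (by positivity) (by linarith))
  have hperturb := mul_add_mul_inv_le_mul_add_mul_inv_add_abs_sub hg hg1 hh hh1 hc hv hφ
  rw [Real.sq_sqrt (by positivity), inv_div] at hperturb
  have hopt := mul_sqrt_div_add_mul_inv_sqrt_div_le hg hh hδ
  have hreg := sqrt_add_mul_sqrt_add_le hg hg1 hh hh1 hδ.le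
  linarith

namespace BoundedContinuousFunction

variable {X : Type*} [TopologicalSpace X] (f : X →ᵇ ℝ) {c : ℝ}

lemma exists_eq_inv (hc : 0 < c) (hfc : ∀ x, c ≤ f x) : ∃ g : X →ᵇ ℝ, ∀ x, g x = (f x)⁻¹ := by
  refine ⟨ofNormedAddCommGroup (fun x ↦ (f x)⁻¹)
    (f.continuous.inv₀ fun x ↦ (hc.trans_le (hfc x)).ne') c⁻¹ fun x ↦ ?_, fun x ↦ rfl⟩
  rw [norm_inv, Real.norm_of_nonneg (hc.le.trans (hfc x))]
  exact inv_anti₀ hc (hfc x)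

lemma integrable_inv [MeasurableSpace X] [OpensMeasurableSpace X] (μ : Measure X)
    [IsFiniteMeasure μ] (hc : 0 < c) (hfc : ∀ x, c ≤ f x) : Integrable (fun x ↦ (f x)⁻¹) μ := by
  obtain ⟨g, hg⟩ := f.exists_eq_inv hc hfc
  simpa only [← hg] using g.integrable μ

end BoundedContinuousFunction

namespace MeasureTheory.Measure

variable {X : Type*} [MeasurableSpace X]

lemma toReal_rnDeriv_le_one_of_le {μ κ : Measure X} [SigmaFinite κ] (h : μ ≤ κ) :
    ∀ᵐ x ∂κ, (μ.rnDeriv κ x).toReal ≤ 1 := by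
  filter_upwards [rnDeriv_le_one_of_le h] with x hx
  exact ENNReal.toReal_le_of_le_ofReal zero_le_one (by simpa using hx)

end MeasureTheory.Measure

section

variable {X : Type*} [MeasurableSpace X] (μ ν : Measure X)

noncomputable def affinityDual (f : X → ℝ) : ℝ :=
  (∫ x, f x ∂μ + ∫ x, (f x)⁻¹ ∂ν) / 2

/-- For `δ = 0` this is `√(dν/dμ)`, at which `affinityDual μ ν` attains `hellingerAffinity μ ν`;
a shift `δ > 0` keeps it bounded away from `0` and `∞`. -/
noncomputable def regularizedDensityRatio (δ : ℝ) (x : X) : ℝ :=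
  √(((ν.rnDeriv (μ + ν) x).toReal + δ) / ((μ.rnDeriv (μ + ν) x).toReal + δ))

lemma measurable_regularizedDensityRatio (δ : ℝ) : Measurable (regularizedDensityRatio μ ν δ) :=
  ((((ν.measurable_rnDeriv _).ennreal_toReal.add_const δ).div
    ((μ.measurable_rnDeriv _).ennreal_toReal.add_const δ))).sqrt

section SigmaFinite

variable [SigmaFinite μ] [SigmaFinite ν]

lemma affinityDual_eq_integral {f : X → ℝ} (hfμ : Integrable f μ)
    (hfν : Integrable (fun x ↦ (f x)⁻¹) ν) :
    affinityDual μ ν f = ∫ x, ((μ.rnDeriv (μ + ν) x).toReal * f x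
      + (ν.rnDeriv (μ + ν) x).toReal * (f x)⁻¹) / 2 ∂(μ + ν) := by
  have hμ : μ ≪ μ + ν := (Measure.le_add_right le_rfl).absolutelyContinuous
  have hν : ν ≪ μ + ν := (Measure.le_add_left le_rfl).absolutelyContinuous
  rw [integral_div, integral_add ((integrable_toReal_rnDeriv_mul_iff hμ).2 hfμ)
    ((integrable_toReal_rnDeriv_mul_iff hν).2 hfν), integral_toReal_rnDeriv_mul hμ,
    integral_toReal_rnDeriv_mul hν]
  rfl

theorem hellingerAffinity_le_affinityDual {f : X → ℝ} (hf : ∀ x, 0 < f x)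
    (hfμ : Integrable f μ) (hfν : Integrable (fun x ↦ (f x)⁻¹) ν) :
    hellingerAffinity μ ν ≤ affinityDual μ ν f := by
  have hμ : μ ≪ μ + ν := (Measure.le_add_right le_rfl).absolutelyContinuous
  have hν : ν ≪ μ + ν := (Measure.le_add_left le_rfl).absolutelyContinuous
  rw [affinityDual_eq_integral μ ν hfμ hfν]
  refine integral_mono_of_nonneg (ae_of_all _ fun x ↦ Real.sqrt_nonneg _)
    ((((integrable_toReal_rnDeriv_mul_iff hμ).2 hfμ).add
      ((integrable_toReal_rnDeriv_mul_iff hν).2 hfν)).div_const 2) (ae_of_all _ fun x ↦ ?_)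
  exact sqrt_mul_le_mul_add_mul_inv ENNReal.toReal_nonneg ENNReal.toReal_nonneg (hf x)

lemma regularizedDensityRatio_mem_Icc {δ : ℝ} (hδ : 0 < δ) :
    ∀ᵐ x ∂(μ + ν), regularizedDensityRatio μ ν δ x ∈ Set.Icc √(δ / (1 + δ)) √((1 + δ) / δ) := by
  filter_upwards [Measure.toReal_rnDeriv_le_one_of_le (Measure.le_add_right le_rfl : μ ≤ μ + ν),
    Measure.toReal_rnDeriv_le_one_of_le (Measure.le_add_left le_rfl : ν ≤ μ + ν)] with x hg hh
  have hg0 : 0 ≤ (μ.rnDeriv (μ + ν) x).toReal := ENNReal.toReal_nonneg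
  have hh0 : 0 ≤ (ν.rnDeriv (μ + ν) x).toReal := ENNReal.toReal_nonneg
  exact ⟨Real.sqrt_le_sqrt
      (div_le_div₀ (by positivity) (by linarith) (by positivity) (by linarith)),
    Real.sqrt_le_sqrt (div_le_div₀ (by positivity) (by linarith) hδ (by linarith))⟩

end SigmaFinite

section Finite

variable [IsFiniteMeasure μ] [IsFiniteMeasure ν]

lemma integrable_regularizedDensityRatio {δ : ℝ} (hδ : 0 < δ) :
    Integrable (regularizedDensityRatio μ ν δ) (μ + ν) := by
  refine Integrable.mono' (integrable_const √((1 + δ) / δ))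
    (measurable_regularizedDensityRatio μ ν δ).aestronglyMeasurable ?_
  filter_upwards [regularizedDensityRatio_mem_Icc μ ν hδ] with x hx
  rw [Real.norm_of_nonneg ((Real.sqrt_nonneg _).trans hx.1)]
  exact hx.2

theorem affinityDual_le_hellingerAffinity_add {δ : ℝ} (hδ : 0 < δ) {v : X → ℝ}
    (hv : ∀ x, √(δ / (1 + δ)) ≤ v x) (hvκ : Integrable v (μ + ν))
    (hvν : Integrable (fun x ↦ (v x)⁻¹) ν) :
    affinityDual μ ν v ≤ hellingerAffinity μ ν + (2 * √δ + δ) * (μ + ν).real Set.univ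
      + (1 + (1 + δ) / δ) / 2 * ∫ x, |v x - regularizedDensityRatio μ ν δ x| ∂(μ + ν) := by
  set g := fun x ↦ (μ.rnDeriv (μ + ν) x).toReal
  set h := fun x ↦ (ν.rnDeriv (μ + ν) x).toReal
  set φ := regularizedDensityRatio μ ν δ
  have hg1 := Measure.toReal_rnDeriv_le_one_of_le (Measure.le_add_right le_rfl : μ ≤ μ + ν)
  have hh1 := Measure.toReal_rnDeriv_le_one_of_le (Measure.le_add_left le_rfl : ν ≤ μ + ν)
  have hpoint : ∀ᵐ x ∂(μ + ν), (g x * v x + h x * (v x)⁻¹) / 2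
      ≤ √(g x * h x) + (2 * √δ + δ) + (1 + (1 + δ) / δ) / 2 * |v x - φ x| := by
    filter_upwards [hg1, hh1] with x hgx hhx
    exact mul_add_mul_inv_le_sqrt_mul_add ENNReal.toReal_nonneg hgx ENNReal.toReal_nonneg hhx hδ
      (hv x)
  have hgh : Integrable (fun x ↦ √(g x * h x)) (μ + ν) := by
    refine Integrable.mono' (integrable_const 1) (((μ.measurable_rnDeriv _).ennreal_toReal.mul
      (ν.measurable_rnDeriv _).ennreal_toReal).sqrt.aestronglyMeasurable) ?_
    filter_upwards [hg1, hh1] with x hgx hhx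
    rw [Real.norm_of_nonneg (Real.sqrt_nonneg _), Real.sqrt_le_one]
    exact mul_le_one₀ hgx ENNReal.toReal_nonneg hhx
  have hdist : Integrable (fun x ↦ |v x - φ x|) (μ + ν) :=
    (hvκ.sub (integrable_regularizedDensityRatio μ ν hδ)).abs
  have hconst : Integrable (fun x ↦ √(g x * h x) + (2 * √δ + δ)) (μ + ν) :=
    hgh.add (integrable_const _)
  calc affinityDual μ ν v = ∫ x, (g x * v x + h x * (v x)⁻¹) / 2 ∂(μ + ν) :=
        affinityDual_eq_integral μ ν (hvκ.mono_measure (Measure.le_add_right le_rfl)) hvν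
    _ ≤ ∫ x, (√(g x * h x) + (2 * √δ + δ) + (1 + (1 + δ) / δ) / 2 * |v x - φ x|) ∂(μ + ν) := by
        refine integral_mono_of_nonneg (ae_of_all _ fun x ↦ ?_)
          (hconst.add (hdist.const_mul _)) hpoint
        have hvx : 0 < v x := (Real.sqrt_pos.2 (by positivity)).trans_le (hv x)
        have : 0 ≤ g x := ENNReal.toReal_nonneg
        have : 0 ≤ h x := ENNReal.toReal_nonneg
        positivity
    _ = hellingerAffinity μ ν + (2 * √δ + δ) * (μ + ν).real Set.univ
          + (1 + (1 + δ) / δ) / 2 * ∫ x, |v x - φ x| ∂(μ + ν) := by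
        rw [integral_add hconst (hdist.const_mul _),
          integral_add hgh (integrable_const _), integral_const, integral_const_mul, smul_eq_mul,
          mul_comm ((μ + ν).real Set.univ)]
        rfl

end Finite

end

theorem exists_boundedContinuous_affinityDual_le {X : Type*} [TopologicalSpace X] [NormalSpace X]
    [MeasurableSpace X] [BorelSpace X] (μ ν : Measure X) [IsFiniteMeasure μ] [IsFiniteMeasure ν]
    [(μ + ν).WeaklyRegular] {ε : ℝ} (hε : 0 < ε) :
    ∃ f : X →ᵇ ℝ, ∃ c > 0, (∀ x, c ≤ f x) ∧ affinityDual μ ν f ≤ hellingerAffinity μ ν + ε := by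
  have hreg : Tendsto (fun δ : ℝ ↦ (2 * √δ + δ) * (μ + ν).real Set.univ) (𝓝[>] 0) (𝓝 0) := by
    have hcont : Continuous fun δ : ℝ ↦ (2 * √δ + δ) * (μ + ν).real Set.univ := by fun_prop
    simpa using (hcont.tendsto 0).mono_left nhdsWithin_le_nhds
  obtain ⟨δ, hδε, hδ⟩ :=
    ((hreg.eventually (gt_mem_nhds (half_pos hε))).and self_mem_nhdsWithin).exists
  set c := √(δ / (1 + δ))
  set K := (1 + (1 + δ) / δ) / 2
  have hc : 0 < c := Real.sqrt_pos.2 (by positivity)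
  have hK : 0 < K := by positivity
  have hφ := integrable_regularizedDensityRatio μ ν hδ
  obtain ⟨u, hu, -⟩ := hφ.exists_boundedContinuous_integral_sub_le (div_pos (half_pos hε) hK)
  set f := u ⊔ BoundedContinuousFunction.const X c
  have hfc : ∀ x, c ≤ f x := fun x ↦ le_sup_right
  refine ⟨f, c, hc, hfc, ?_⟩
  have hdist : ∫ x, |f x - regularizedDensityRatio μ ν δ x| ∂(μ + ν) ≤ ε / 2 / K := by
    refine le_trans (integral_mono_of_nonneg (ae_of_all _ fun x ↦ abs_nonneg _) ?_ ?_) hu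
    · exact (hφ.sub (u.integrable _)).norm
    · filter_upwards [regularizedDensityRatio_mem_Icc μ ν hδ] with x hx
      rw [Real.norm_eq_abs, abs_sub_comm (regularizedDensityRatio μ ν δ x)]
      have hclamp := abs_max_sub_max_le_abs (u x) (regularizedDensityRatio μ ν δ x) c
      rwa [max_eq_left hx.1] at hclamp
  calc affinityDual μ ν f
      ≤ hellingerAffinity μ ν + (2 * √δ + δ) * (μ + ν).real Set.univ
          + K * ∫ x, |f x - regularizedDensityRatio μ ν δ x| ∂(μ + ν) :=
        affinityDual_le_hellingerAffinity_add μ ν hδ hfc (f.integrable _)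
          (f.integrable_inv ν hc hfc)
    _ ≤ hellingerAffinity μ ν + ε / 2 + K * (ε / 2 / K) := by gcongr
    _ = hellingerAffinity μ ν + ε := by field_simp; ring

theorem tendsto_affinityDual {X : Type*} [TopologicalSpace X] [MeasurableSpace X]
    [OpensMeasurableSpace X] {ι : Type*} {l : Filter ι} {μs νs : ι → ProbabilityMeasure X}
    {μ ν : ProbabilityMeasure X} (hμ : Tendsto μs l (𝓝 μ)) (hν : Tendsto νs l (𝓝 ν))
    (f : X →ᵇ ℝ) {c : ℝ} (hc : 0 < c) (hfc : ∀ x, c ≤ f x) :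
    Tendsto (fun i ↦ affinityDual (μs i : Measure X) (νs i) f) l
      (𝓝 (affinityDual (μ : Measure X) ν f)) := by
  obtain ⟨g, hg⟩ := f.exists_eq_inv hc hfc
  simp only [affinityDual, ← hg]
  exact ((ProbabilityMeasure.tendsto_iff_forall_integral_tendsto.1 hμ f).add
    (ProbabilityMeasure.tendsto_iff_forall_integral_tendsto.1 hν g)).div_const 2

theorem limsup_hellingerAffinity_le {X : Type*} [TopologicalSpace X]
    [TopologicalSpace.PseudoMetrizableSpace X] [MeasurableSpace X] [BorelSpace X]
    {ι : Type*} {l : Filter ι} [l.NeBot] {μs νs : ι → ProbabilityMeasure X}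
    {μ ν : ProbabilityMeasure X} (hμ : Tendsto μs l (𝓝 μ)) (hν : Tendsto νs l (𝓝 ν)) :
    limsup (fun i ↦ hellingerAffinity (μs i : Measure X) (νs i)) l
      ≤ hellingerAffinity (μ : Measure X) ν := by
  refine le_of_forall_pos_le_add fun ε hε ↦ ?_
  obtain ⟨f, c, hc, hfc, hf⟩ := exists_boundedContinuous_affinityDual_le (μ : Measure X) ν hε
  have hlim := tendsto_affinityDual hμ hν f hc hfc
  have hle : ∀ i, hellingerAffinity (μs i : Measure X) (νs i)
      ≤ affinityDual (μs i : Measure X) (νs i) f :=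
    fun i ↦ hellingerAffinity_le_affinityDual _ _ (fun x ↦ hc.trans_le (hfc x)) (f.integrable _)
      (f.integrable_inv _ hc hfc)
  calc limsup (fun i ↦ hellingerAffinity (μs i : Measure X) (νs i)) l
      ≤ limsup (fun i ↦ affinityDual (μs i : Measure X) (νs i) f) l :=
        limsup_le_limsup (Eventually.of_forall hle)
          (isCoboundedUnder_le_of_le l fun i ↦ integral_nonneg fun x ↦ Real.sqrt_nonneg _)
          hlim.isBoundedUnder_le
    _ = affinityDual (μ : Measure X) ν f := hlim.limsup_eq
    _ ≤ hellingerAffinity (μ : Measure X) ν + ε := hf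

/-- Coquet–Mendès-France–Kamae: if `σ_n → σ` and `ρ_n → ρ` weakly
(as probability measures on the circle), then `limsup G(σ_n, ρ_n) ≤ G(σ, ρ)`. -/
theorem limsup_affinity_le
    (σn ρn : ℕ → ProbabilityMeasure (AddCircle (1:ℝ)))
    (σ ρ : ProbabilityMeasure (AddCircle (1:ℝ)))
    (hσ : Tendsto σn atTop (𝓝 σ)) (hρ : Tendsto ρn atTop (𝓝 ρ)) :
    Filter.limsup (fun n => hellingerAffinity (σn n : Measure (AddCircle (1:ℝ)))
        (ρn n : Measure (AddCircle (1:ℝ)))) atTop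
      ≤ hellingerAffinity (σ : Measure (AddCircle (1:ℝ))) (ρ : Measure (AddCircle (1:ℝ))) :=
  limsup_hellingerAffinity_le hσ hρ
end

section
/- Let μ be a generalized Riesz product based on polynomials (P_k), and suppose ℕ is partitioned into k subsequences 𝒩_1,...,𝒩_k with associated generalized Riesz products μ_1,...,μ_k satisfying √(dμ/dz) = Π_{i=1}^k √(dμ_i/dz) a.e., and (∫√(dμ_i/dz) dz)^2 ≤ ∫|P_{j_i}| dz where j_i is the least element of 𝒩_i. Then ∫ (dμ/dz)^{1/(2k)} dz ≤ Π_{i=1}^k (∫|P_{j_i}| dz)^{1/(2k)}. -/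
/-!
Since `(dμ/dz)^{1/(2k)} = ∏ᵢ (√(dμᵢ/dz))^{1/k}` a.e., the generalized Hölder inequality with
the `k` exponents `1/k` bounds `∫ (dμ/dz)^{1/(2k)}` by `∏ᵢ (∫ √(dμᵢ/dz))^{1/k}`, and each factor
is at most `bᵢ^{1/(2k)}` by hypothesis.
-/

open MeasureTheory Filter Real

namespace MeasureTheory

variable {α ι : Type*} [MeasurableSpace α] {μ : Measure α}

theorem integral_prod_rpow_le (s : Finset ι) {f : ι → α → ℝ}
    (hf : ∀ i ∈ s, Integrable (f i) μ) (hf₀ : ∀ i ∈ s, 0 ≤ᵐ[μ] f i)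
    {p : ι → ℝ} (hp : ∑ i ∈ s, p i = 1) (hp₀ : ∀ i ∈ s, 0 ≤ p i) :
    ∫ a, ∏ i ∈ s, f i a ^ p i ∂μ ≤ ∏ i ∈ s, (∫ a, f i a ∂μ) ^ p i := by
  have hf₀' : ∀ᵐ a ∂μ, ∀ i ∈ s, 0 ≤ f i a := (eventually_all_finset s).2 hf₀
  have hofReal : ∀ᵐ a ∂μ, ENNReal.ofReal (∏ i ∈ s, f i a ^ p i)
      = ∏ i ∈ s, ENNReal.ofReal (f i a) ^ p i := by
    filter_upwards [hf₀'] with a ha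
    rw [ENNReal.ofReal_prod_of_nonneg fun i hi => rpow_nonneg (ha i hi) _]
    exact Finset.prod_congr rfl fun i hi =>
      (ENNReal.ofReal_rpow_of_nonneg (ha i hi) (hp₀ i hi)).symm
  have hfin : ∏ i ∈ s, (∫⁻ a, ENNReal.ofReal (f i a) ∂μ) ^ p i ≠ ⊤ :=
    ENNReal.prod_ne_top fun i hi =>
      ENNReal.rpow_ne_top_of_nonneg (hp₀ i hi) (hf i hi).lintegral_lt_top.ne
  calc ∫ a, ∏ i ∈ s, f i a ^ p i ∂μ
      = (∫⁻ a, ∏ i ∈ s, ENNReal.ofReal (f i a) ^ p i ∂μ).toReal := by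
        rw [integral_eq_lintegral_of_nonneg_ae, lintegral_congr_ae hofReal]
        · filter_upwards [hf₀'] with a ha
          exact Finset.prod_nonneg fun i hi => rpow_nonneg (ha i hi) _
        · exact (Finset.aemeasurable_fun_prod s fun i hi =>
            (hf i hi).aemeasurable.pow_const _).aestronglyMeasurable
    _ ≤ (∏ i ∈ s, (∫⁻ a, ENNReal.ofReal (f i a) ∂μ) ^ p i).toReal :=
        ENNReal.toReal_mono hfin <| ENNReal.lintegral_prod_norm_pow_le s
          (fun i hi => (hf i hi).aemeasurable.ennreal_ofReal) hp hp₀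
    _ = ∏ i ∈ s, (∫ a, f i a ∂μ) ^ p i := by
        rw [ENNReal.toReal_prod]
        refine Finset.prod_congr rfl fun i hi => ?_
        rw [← ENNReal.toReal_rpow, integral_eq_lintegral_of_nonneg_ae (hf₀ i hi)
          (hf i hi).aestronglyMeasurable]

theorem Measure.integrable_sqrt_toReal_rnDeriv {ν : Measure α} [IsFiniteMeasure μ]
    [IsFiniteMeasure ν] : Integrable (fun x => √(μ.rnDeriv ν x).toReal) ν := by
  refine ((integrable_const (1 : ℝ)).add (Measure.integrable_toReal_rnDeriv (μ := μ))).mono'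
    (μ.measurable_rnDeriv ν).ennreal_toReal.sqrt.aestronglyMeasurable
    (ae_of_all _ fun x => ?_)
  have hx : 0 ≤ (μ.rnDeriv ν x).toReal := ENNReal.toReal_nonneg
  rw [Real.norm_of_nonneg (sqrt_nonneg _), Pi.add_apply, sqrt_le_left (by positivity)]
  nlinarith

end MeasureTheory

theorem Real.rpow_one_div_two_mul {x : ℝ} (hx : 0 ≤ x) (r : ℝ) :
    x ^ (1 / (2 * r)) = √x ^ (1 / r) := by
  rw [sqrt_eq_rpow, ← rpow_mul hx, one_div_mul_one_div]

theorem holder_riesz_partition_general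
    {k : ℕ} (hk : 1 ≤ k)
    (μ : Measure (AddCircle (1:ℝ))) (μi : Fin k → Measure (AddCircle (1:ℝ)))
    [IsFiniteMeasure μ] [∀ i, IsFiniteMeasure (μi i)]
    (b : Fin k → ℝ)
    (hfactor : ∀ᵐ z,
      Real.sqrt ((μ.rnDeriv volume z).toReal)
        = ∏ i : Fin k, Real.sqrt (((μi i).rnDeriv volume z).toReal))
    (hbound : ∀ i : Fin k,
      (∫ z, Real.sqrt (((μi i).rnDeriv volume z).toReal)) ^ 2 ≤ b i) :
    (∫ z, ((μ.rnDeriv volume z).toReal) ^ ((1:ℝ) / (2 * k)))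
      ≤ ∏ i : Fin k, (b i) ^ ((1:ℝ) / (2 * k)) := by
  have hsum : ∑ _i : Fin k, (1:ℝ) / k = 1 := by
    have hk₀ : (k : ℝ) ≠ 0 := Nat.cast_ne_zero.2 (Nat.one_le_iff_ne_zero.1 hk)
    simp [hk₀]
  calc (∫ z, ((μ.rnDeriv volume z).toReal) ^ ((1:ℝ) / (2 * k)))
      = ∫ z, ∏ i : Fin k, √((μi i).rnDeriv volume z).toReal ^ ((1:ℝ) / k) := by
        refine integral_congr_ae ?_
        filter_upwards [hfactor] with z hz
        rw [rpow_one_div_two_mul ENNReal.toReal_nonneg, hz,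
          ← finsetProd_rpow _ _ fun i _ => sqrt_nonneg _]
    _ ≤ ∏ i : Fin k, (∫ z, √((μi i).rnDeriv volume z).toReal) ^ ((1:ℝ) / k) :=
        integral_prod_rpow_le _ (fun i _ => Measure.integrable_sqrt_toReal_rnDeriv)
          (fun i _ => ae_of_all _ fun _ => sqrt_nonneg _) hsum (fun i _ => by positivity)
    _ ≤ ∏ i : Fin k, (b i) ^ ((1:ℝ) / (2 * k)) := by
        refine Finset.prod_le_prod (fun i _ => by positivity) fun i _ => ?_
        have hint : 0 ≤ ∫ z, √((μi i).rnDeriv volume z).toReal :=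
          integral_nonneg fun _ => sqrt_nonneg _
        rw [← sqrt_sq hint, ← rpow_one_div_two_mul (sq_nonneg _)]
        exact rpow_le_rpow (sq_nonneg _) (hbound i) (by positivity)

/-- Suppose the derivative of a generalized Riesz product `μ` (a finite
measure on the circle) factors a.e. as `√(dμ/dz) = Π_{i=1}^k √(dμ_i/dz)` for finite
measures `μ_1, …, μ_k`, and `(∫ √(dμ_i/dz) dz)² ≤ b_i` where `b_i = ∫ |P_{j_i}| dz ≥ 0`.
Then `∫ (dμ/dz)^{1/(2k)} dz ≤ Π_{i=1}^k b_i^{1/(2k)}`. -/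
theorem holder_riesz_partition
    {k : ℕ} (hk : 1 ≤ k)
    (μ : Measure (AddCircle (1:ℝ))) (μi : Fin k → Measure (AddCircle (1:ℝ)))
    [IsFiniteMeasure μ] [∀ i, IsFiniteMeasure (μi i)]
    (b : Fin k → ℝ) (hb : ∀ i, 0 ≤ b i)
    (hfactor : ∀ᵐ z,
      Real.sqrt ((μ.rnDeriv volume z).toReal)
        = ∏ i : Fin k, Real.sqrt (((μi i).rnDeriv volume z).toReal))
    (hbound : ∀ i : Fin k,
      (∫ z, Real.sqrt (((μi i).rnDeriv volume z).toReal)) ^ 2 ≤ b i) :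
    (∫ z, ((μ.rnDeriv volume z).toReal) ^ ((1:ℝ) / (2 * k)))
      ≤ ∏ i : Fin k, (b i) ^ ((1:ℝ) / (2 * k)) :=
  holder_riesz_partition_general hk μ μi b hfactor hbound
end
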